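/- arXiv:2406.04737 — 2 statements merged into one kernel-verified Lean document; each statement's English description precedes it below -/
import Mathlib

section
/- For σ > 0 and φ with cos(2φ) ≥ 0 (e.g., φ ∈ [0, π/4]), the function s ↦ E(s, φ) = (cos 2φ − s·cos 2φ)·erf(1/√(2s)) + √(2s/π)·cos(2φ)·e^{−1/(2s)} + sin²φ is nonincreasing in s = σ² on (0, ∞); for φ ∈ (π/4, π/2] (cos 2φ ≤ 0) it is nondecreasing. -/
open Real

noncomputable def erf (t : ℝ) : ℝ :=
  (2 / Real.sqrt π) * ∫ u in (0:ℝ)..t, Real.exp (-(u ^ 2))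

noncomputable def Egain (s φ : ℝ) : ℝ :=
  (cos (2 * φ) - s * cos (2 * φ)) * erf (1 / Real.sqrt (2 * s))
    + Real.sqrt (2 * s / π) * cos (2 * φ) * Real.exp (-(1 / (2 * s)))
    + sin φ ^ 2

/-!
With `t = 1 / √(2s)`, which decreases in `s`, one has `Egain s φ = cos (2φ) · G t + sin² φ`
where `G = gainProfile`. Differentiating,
`G' t = (erf t - (2/√π) t e^{-t²}) / t³`, which is nonnegative because `e^{-u²} ≥ e^{-t²}`
on `[0, t]`. So `G (1 / √(2s))` is antitone in `s`, and the sign of `cos (2φ)` decides the rest.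
-/

lemma continuous_exp_neg_sq : Continuous fun u : ℝ => exp (-(u ^ 2)) := by
  fun_prop

lemma hasDerivAt_erf (t : ℝ) : HasDerivAt erf (2 / √π * exp (-(t ^ 2))) t :=
  (intervalIntegral.integral_hasDerivAt_right (continuous_exp_neg_sq.intervalIntegrable _ _)
    (continuous_exp_neg_sq.stronglyMeasurableAtFilter _ _)
    continuous_exp_neg_sq.continuousAt).const_mul _

lemma two_div_sqrt_pi_mul_mul_exp_le_erf {t : ℝ} (ht : 0 ≤ t) :
    2 / √π * (t * exp (-(t ^ 2))) ≤ erf t := by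
  have hint : ∫ _ in (0:ℝ)..t, exp (-(t ^ 2)) ≤ ∫ u in (0:ℝ)..t, exp (-(u ^ 2)) :=
    intervalIntegral.integral_mono_on ht intervalIntegrable_const
      (continuous_exp_neg_sq.intervalIntegrable _ _) fun u hu =>
        exp_le_exp.2 (neg_le_neg (pow_le_pow_left₀ hu.1 hu.2 2))
  rw [intervalIntegral.integral_const, sub_zero, smul_eq_mul] at hint
  exact mul_le_mul_of_nonneg_left hint (by positivity)

noncomputable def gainProfile (t : ℝ) : ℝ :=
  (1 - 1 / (2 * t ^ 2)) * erf t + exp (-(t ^ 2)) / (√π * t)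

lemma Egain_eq_gainProfile {s : ℝ} (hs : 0 < s) (φ : ℝ) :
    Egain s φ = cos (2 * φ) * gainProfile (1 / √(2 * s)) + sin φ ^ 2 := by
  have hsq : √(2 * s) ^ 2 = 2 * s := sq_sqrt (by positivity)
  have hpi : √π ≠ 0 := (sqrt_pos.2 pi_pos).ne'
  have hroot : √(2 * s) ≠ 0 := (sqrt_pos.2 (by positivity)).ne'
  rw [Egain, gainProfile, sqrt_div (by positivity), div_pow, one_pow, hsq]
  field_simp

lemma hasDerivAt_gainProfile {t : ℝ} (ht : t ≠ 0) :
    HasDerivAt gainProfile ((erf t - 2 / √π * (t * exp (-(t ^ 2)))) / t ^ 3) t := by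
  have hpi : √π ≠ 0 := (sqrt_pos.2 pi_pos).ne'
  have hcoef : HasDerivAt (fun x => 1 - 1 / (2 * x ^ 2)) (1 / t ^ 3) t := by
    simp only [one_div]
    refine ((((hasDerivAt_pow 2 t).const_mul 2).inv (by positivity)).const_sub 1).congr_deriv ?_
    field_simp
    ring
  have hgauss : HasDerivAt (fun x => exp (-(x ^ 2))) (-(2 * t) * exp (-(t ^ 2))) t := by
    refine (hasDerivAt_pow 2 t).neg.exp.congr_deriv ?_
    simp
    ring
  have hden : HasDerivAt (fun x => √π * x) √π t := by
    simpa using (hasDerivAt_id t).const_mul √π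
  refine ((hcoef.mul (hasDerivAt_erf t)).add (hgauss.div hden (by simp [hpi, ht]))).congr_deriv ?_
  field_simp
  ring

lemma monotoneOn_gainProfile : MonotoneOn gainProfile (Set.Ioi 0) := by
  refine monotoneOn_of_hasDerivWithinAt_nonneg
    (f' := fun t => (erf t - 2 / √π * (t * exp (-(t ^ 2)))) / t ^ 3) (convex_Ioi 0)
    (fun t ht => (hasDerivAt_gainProfile (ne_of_gt ht)).continuousAt.continuousWithinAt)
    (fun t ht => ?_) (fun t ht => ?_) <;> rw [interior_Ioi] at ht
  · exact (hasDerivAt_gainProfile (ne_of_gt ht)).hasDerivWithinAt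
  · exact div_nonneg (sub_nonneg.2 (two_div_sqrt_pi_mul_mul_exp_le_erf ht.le)) (pow_nonneg ht.le 3)

lemma antitoneOn_one_div_sqrt_two_mul : AntitoneOn (fun s : ℝ => 1 / √(2 * s)) (Set.Ioi 0) :=
  fun a ha b _ hab => one_div_le_one_div_of_le (sqrt_pos.2 (by simpa using ha))
    (sqrt_le_sqrt (by linarith))

lemma antitoneOn_gainProfile_one_div_sqrt_two_mul :
    AntitoneOn (fun s : ℝ => gainProfile (1 / √(2 * s))) (Set.Ioi 0) := by
  have hmaps : ∀ s ∈ Set.Ioi (0:ℝ), 1 / √(2 * s) ∈ Set.Ioi 0 := fun s hs =>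
    one_div_pos.2 (sqrt_pos.2 (by simpa using hs))
  exact fun a ha b hb hab =>
    monotoneOn_gainProfile (hmaps b hb) (hmaps a ha) (antitoneOn_one_div_sqrt_two_mul ha hb hab)

theorem Egain_monotonicity (φ : ℝ) :
    (0 ≤ cos (2 * φ) → AntitoneOn (fun s => Egain s φ) (Set.Ioi (0:ℝ))) ∧
    (cos (2 * φ) ≤ 0 → MonotoneOn (fun s => Egain s φ) (Set.Ioi (0:ℝ))) := by
  refine ⟨fun hc a ha b hb hab => ?_, fun hc a ha b hb hab => ?_⟩ <;>
    simp only [Egain_eq_gainProfile ha, Egain_eq_gainProfile hb, add_le_add_iff_right]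
  · exact mul_le_mul_of_nonneg_left (antitoneOn_gainProfile_one_div_sqrt_two_mul ha hb hab) hc
  · exact mul_le_mul_of_nonpos_left (antitoneOn_gainProfile_one_div_sqrt_two_mul ha hb hab) hc
end

section
/- Let Y ~ N(0, σ²) and for fixed φ define J = cos²φ(1 − min(Y²,1)) + sin²φ·min(Y²,1) − sign(Y)·2cosφ sinφ·√(min(Y²,1) − min(Y²,1)²). Then E[J] = (cos 2φ)(1 − σ²)·erf(1/√(2σ²)) + √(2σ²/π)·cos(2φ)·e^{−1/(2σ²)} + sin²φ. -/
/-!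
Since `cos²φ (1 - X) + sin²φ X = cos²φ - cos 2φ X` and the sign term is odd in `Y`, the expectation
reduces to `cos²φ - cos 2φ E[min(Y², 1)]`. Writing `min(y², 1) = 1 - (1 - y²) 1_{|y| ≤ 1}`, the
remaining Gaussian integral over `[-1, 1]` follows from `(y p(y))' = (1 - y²/σ²) p(y)` for the
density `p`: it equals `(1 - σ²) ∫_{-1}^{1} p + 2σ² p(1)`, and `∫_{-1}^{1} p = erf (1/√(2σ²))`.
-/

open Real MeasureTheory ProbabilityTheory

open scoped NNReal

lemma Real.monotone_sign : Monotone Real.sign := by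
  intro a b hab
  rcases lt_trichotomy a 0 with ha | rfl | ha <;> rcases lt_trichotomy b 0 with hb | rfl | hb <;>
    simp [sign_of_neg, sign_of_pos, *] <;> linarith

lemma Real.abs_sign_le_one (r : ℝ) : |Real.sign r| ≤ 1 := by
  rcases sign_apply_eq r with h | h | h <;> simp [h]

lemma Function.Odd.integral_eq_zero {G E : Type*} [MeasurableSpace G] [AddGroup G]
    [MeasurableNeg G] [NormedAddCommGroup E] [NormedSpace ℝ E] {f : G → E} (hf : f.Odd)
    (μ : Measure G) [μ.IsNegInvariant] : ∫ x, f x ∂μ = 0 := by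
  have h := integral_neg_eq_self f μ
  simp only [hf _, integral_neg] at h
  have h2 : (2 : ℝ) • ∫ x, f x ∂μ = 0 := by
    rw [two_smul]; nth_rewrite 1 [← h]; exact neg_add_cancel _
  exact (smul_eq_zero.mp h2).resolve_left two_ne_zero

instance ProbabilityTheory.isNegInvariant_gaussianReal_zero (v : ℝ≥0) :
    (gaussianReal 0 v).IsNegInvariant :=
  ⟨by simpa [Measure.neg] using gaussianReal_map_neg (μ := 0) (v := v)⟩

lemma Function.Even.intervalIntegral_neg_self_eq_two_mul {f : ℝ → ℝ} (hf : f.Even) {t : ℝ}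
    (hfi : IntervalIntegrable f volume 0 t) :
    ∫ x in -t..t, f x = 2 * ∫ x in 0..t, f x := by
  have hneg : ∫ x in -t..0, f x = ∫ x in 0..t, f x := by
    simpa [hf _] using (intervalIntegral.integral_comp_neg (a := 0) (b := t) f).symm
  have hfi' : IntervalIntegrable f volume (-t) 0 := by
    simpa [hf _] using ((IntervalIntegrable.iff_comp_neg (f := f)).mp hfi).symm
  rw [← intervalIntegral.integral_add_adjacent_intervals hfi' hfi, hneg]
  ring

lemma integral_exp_neg_sq_neg_self (t : ℝ) : ∫ u in -t..t, exp (-u ^ 2) = √π * erf t := by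
  rw [Function.Even.intervalIntegral_neg_self_eq_two_mul (fun u => by simp)
    ((by fun_prop : Continuous fun u : ℝ => exp (-u ^ 2)).intervalIntegrable 0 t), erf]
  field_simp

lemma continuous_gaussianPDFReal (μ : ℝ) (v : ℝ≥0) : Continuous (gaussianPDFReal μ v) := by
  rw [gaussianPDFReal_def]; fun_prop

section GaussianPDF

variable (v : ℝ≥0)

lemma gaussianPDFReal_zero_even : (gaussianPDFReal 0 v).Even := fun y => by
  simp [gaussianPDFReal]

lemma hasDerivAt_mul_gaussianPDFReal_zero (y : ℝ) :
    HasDerivAt (fun y => y * gaussianPDFReal 0 v y)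
      ((1 - y ^ 2 / v) * gaussianPDFReal 0 v y) y := by
  have hexp := (((hasDerivAt_pow 2 y).fun_neg).div_const (2 * (v : ℝ))).exp
  simp only [gaussianPDFReal_def, sub_zero]
  refine ((hasDerivAt_id' y).fun_mul (hexp.const_mul (√(2 * π * v))⁻¹)).congr_deriv ?_
  push_cast
  ring

lemma integral_one_sub_sq_div_mul_gaussianPDFReal_zero (a b : ℝ) :
    ∫ y in a..b, (1 - y ^ 2 / v) * gaussianPDFReal 0 v y
      = b * gaussianPDFReal 0 v b - a * gaussianPDFReal 0 v a :=
  intervalIntegral.integral_eq_sub_of_hasDerivAt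
    (fun y _ => hasDerivAt_mul_gaussianPDFReal_zero v y)
    ((by fun_prop : Continuous fun y : ℝ => 1 - y ^ 2 / v).mul
      (continuous_gaussianPDFReal 0 v) |>.intervalIntegrable a b)

lemma integral_gaussianPDFReal_zero_neg_self (hv : v ≠ 0) (c : ℝ) :
    ∫ y in -c..c, gaussianPDFReal 0 v y = erf (c / √(2 * v)) := by
  have hs : 0 < √(2 * v) := by positivity
  have hpdf : gaussianPDFReal 0 v
      = fun y => (√π * √(2 * v))⁻¹ * exp (-(y / √(2 * v)) ^ 2) := by
    ext y
    rw [gaussianPDFReal_def, div_pow, sq_sqrt (by positivity), ← sqrt_mul pi_nonneg]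
    ring_nf
  rw [hpdf, intervalIntegral.integral_const_mul,
    intervalIntegral.integral_comp_div (fun u => exp (-u ^ 2)) hs.ne', neg_div, integral_exp_neg_sq_neg_self, smul_eq_mul]
  field_simp

end GaussianPDF

lemma integral_one_sub_sq_mul_gaussianPDFReal_zero {v : ℝ≥0} (hv : v ≠ 0) :
    ∫ y in -1..1, gaussianPDFReal 0 v y * (1 - y ^ 2)
      = (1 - v) * erf (1 / √(2 * v)) + √(2 * v / π) * exp (-(1 / (2 * v))) := by
  have hp := continuous_gaussianPDFReal 0 v
  have hsplit : ∀ y : ℝ, gaussianPDFReal 0 v y * (1 - y ^ 2)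
      = (1 - v) * gaussianPDFReal 0 v y + v * ((1 - y ^ 2 / v) * gaussianPDFReal 0 v y) := by
    intro y; field_simp; ring
  have hboundary : 2 * v * gaussianPDFReal 0 v 1 = √(2 * v / π) * exp (-(1 / (2 * v))) := by
    have h2v : (2 * v : ℝ) = √(2 * v) ^ 2 := (sq_sqrt (by positivity)).symm
    rw [gaussianPDFReal_def, sqrt_div (by positivity), show (2 * π * v : ℝ) = π * (2 * v) by ring,
      sqrt_mul pi_nonneg]
    simp only [one_pow, sub_zero]
    nth_rewrite 1 [h2v]
    field_simp
  rw [intervalIntegral.integral_congr (fun y _ => hsplit y), intervalIntegral.integral_add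
      ((hp.intervalIntegrable _ _).const_mul _)
      (((by fun_prop : Continuous fun y : ℝ => (1 - y ^ 2 / v) * gaussianPDFReal 0 v y)
        |>.intervalIntegrable _ _).const_mul _),
    intervalIntegral.integral_const_mul, intervalIntegral.integral_const_mul,
    integral_gaussianPDFReal_zero_neg_self v hv, integral_one_sub_sq_div_mul_gaussianPDFReal_zero,
    gaussianPDFReal_zero_even v 1, ← hboundary]
  ring

lemma integral_min_sq_one_gaussianReal {v : ℝ≥0} (hv : v ≠ 0) :
    ∫ y, min (y ^ 2) 1 ∂gaussianReal 0 v
      = 1 - (1 - v) * erf (1 / √(2 * v)) - √(2 * v / π) * exp (-(1 / (2 * v))) := by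
  have hclip : ∀ y : ℝ, min (y ^ 2) 1 = 1 - (Set.Icc (-1) 1).indicator (fun y => 1 - y ^ 2) y := by
    intro y
    by_cases hy : y ∈ Set.Icc (-1 : ℝ) 1
    · have : y ^ 2 ≤ 1 := by nlinarith [hy.1, hy.2]
      simp [hy, this]
    · have : 1 ≤ y ^ 2 := by
        simp only [Set.mem_Icc, not_and_or, not_le] at hy
        rcases hy with h | h <;> nlinarith
      simp [hy, this]
  have hint : Integrable ((Set.Icc (-1) 1).indicator fun y : ℝ => 1 - y ^ 2) (gaussianReal 0 v) :=
    (by fun_prop : Continuous fun y : ℝ => 1 - y ^ 2).integrableOn_Icc.integrable_indicator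
      measurableSet_Icc
  rw [integral_congr_ae (ae_of_all _ hclip), integral_sub (integrable_const _) hint,
    integral_const, probReal_univ, one_smul, integral_gaussianReal_eq_integral_smul hv,
    ← funext (Set.indicator_smul_apply _ _ _), integral_indicator measurableSet_Icc,
    integral_Icc_eq_integral_Ioc, ← intervalIntegral.integral_of_le (by norm_num)]
  simp only [smul_eq_mul]
  rw [integral_one_sub_sq_mul_gaussianPDFReal_zero hv]
  ring

theorem expected_clipped_gain (σ φ : ℝ) (hσ : 0 < σ) :
    (∫ y : ℝ,
        (cos φ ^ 2 * (1 - min (y ^ 2) 1) + sin φ ^ 2 * min (y ^ 2) 1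
          - Real.sign y * (2 * cos φ * sin φ)
            * Real.sqrt (min (y ^ 2) 1 - (min (y ^ 2) 1) ^ 2))
        ∂(gaussianReal 0 ⟨σ ^ 2, sq_nonneg σ⟩))
    = cos (2 * φ) * (1 - σ ^ 2) * erf (1 / Real.sqrt (2 * σ ^ 2))
        + Real.sqrt (2 * σ ^ 2 / π) * cos (2 * φ) * Real.exp (-(1 / (2 * σ ^ 2)))
        + sin φ ^ 2 := by
  set v : ℝ≥0 := ⟨σ ^ 2, sq_nonneg σ⟩
  have hvσ : (v : ℝ) = σ ^ 2 := rfl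
  have hv : v ≠ 0 := by rw [ne_eq, ← NNReal.coe_eq_zero, hvσ]; positivity
  set X := fun y : ℝ => min (y ^ 2) 1
  set g := fun y : ℝ => Real.sign y * √(X y - X y ^ 2)
  have hX : Integrable X (gaussianReal 0 v) := by
    refine .of_bound (by fun_prop) 1 (ae_of_all _ fun y => ?_)
    rw [norm_of_nonneg (by positivity)]
    exact min_le_right _ _
  have hg : Integrable g (gaussianReal 0 v) := by
    refine .of_bound (Real.monotone_sign.measurable.mul (by fun_prop)).aestronglyMeasurable 1
      (ae_of_all _ fun y => ?_)
    have hsqrt : √(X y - X y ^ 2) ≤ 1 :=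
      sqrt_le_one.mpr (by nlinarith [min_le_right (y ^ 2) 1, sq_nonneg (X y)])
    rw [norm_mul, norm_of_nonneg (sqrt_nonneg _)]
    exact mul_le_one₀ (Real.abs_sign_le_one y) (sqrt_nonneg _) hsqrt
  have hg_odd : g.Odd := fun y => by simp [g, X, Real.sign_neg]
  calc _ = ∫ y, (cos φ ^ 2 - cos (2 * φ) * X y) - sin (2 * φ) * g y ∂gaussianReal 0 v := by
        congr 1; ext y; rw [cos_two_mul', sin_two_mul]; ring
    _ = cos φ ^ 2 - cos (2 * φ) * ∫ y, X y ∂gaussianReal 0 v := by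
        rw [integral_sub (f := fun y => cos φ ^ 2 - cos (2 * φ) * X y)
          ((integrable_const _).sub (hX.const_mul _)) (hg.const_mul _),
          integral_sub (integrable_const _) (hX.const_mul _), integral_const_mul,
          integral_const_mul, hg_odd.integral_eq_zero _]
        simp
    _ = _ := by
        rw [integral_min_sq_one_gaussianReal hv, hvσ, cos_two_mul']
        ring
end
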